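/- Let β > -1, 0 < p, q < ∞, α > 0, and β > α - 1 + 1/p. There is a constant C > 0 such that for every R ∈ [0,1) the function f_R(z) = (1-Rz)^{-(β+1)} on the unit disc satisfies ( ∫₀¹ M_p(f_R, ρ)^q (1-ρ)^{αq-1} dρ )^{1/q} ≤ C (1-R)^{-(β - α - 1/p + 1)}. -/

import Mathlib

open MeasureTheory Real Complex

open intervalIntegral

set_option maxHeartbeats 1000000 in
lemma absLB {w θ : ℝ} (hw0 : 0 ≤ w) (hw1 : w < 1) (hθ0 : 0 ≤ θ) (hθπ : θ ≤ π) :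
    (1 - w + θ) / (1 + 2*π) ≤ ‖1 - (w:ℂ) * Complex.exp (θ * Complex.I)‖ := by
  have hπ := Real.pi_gt_three
  set z : ℂ := 1 - (w:ℂ) * Complex.exp (θ * Complex.I) with hz
  have hre : z.re = 1 - w * Real.cos θ := by
    simp [hz, Complex.exp_ofReal_mul_I_re]
  have him : z.im = -(w * Real.sin θ) := by
    simp [hz, Complex.exp_ofReal_mul_I_im]
  have hsq : ‖z‖^2 = (1 - w)^2 + 2*w*(1 - Real.cos θ) := by
    rw [Complex.sq_norm, Complex.normSq_apply, hre, him]
    nlinarith [Real.sin_sq_add_cos_sq θ]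
  -- 1 - cos θ ≥ 2 θ² / π²
  have hcos : 2*(θ/π)^2 ≤ 1 - Real.cos θ := by
    have h1 : θ/π ≤ Real.sin (θ/2) := by
      have := Real.mul_le_sin (x := θ/2) (by linarith) (by linarith)
      calc θ/π = 2/π * (θ/2) := by field_simp
        _ ≤ Real.sin (θ/2) := this
    have h2 : Real.sin (θ/2) ^ 2 = 1/2 - Real.cos θ / 2 := by
      have h := Real.sin_sq_eq_half_sub (θ/2)
      rw [show (2:ℝ) * (θ/2) = θ by ring] at h
      linarith
    have h3 : 0 ≤ θ/π := by positivity
    nlinarith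
  have habs : 0 ≤ ‖z‖ := norm_nonneg _
  have ht0 : 0 < (1 - w + θ) / (1 + 2*π) := by
    apply div_pos (by linarith) (by linarith)
  have key : ((1 - w + θ) / (1 + 2*π))^2 ≤ ‖z‖^2 := by
    rw [hsq]
    rcases le_or_gt w (1/2) with hw | hw
    · -- abs² ≥ (1-w)², and 1-w+θ ≤ (1+2π)(1-w)
      have h1 : 1 - Real.cos θ ≥ 0 := by nlinarith [Real.cos_le_one θ]
      have h2 : θ ≤ 2*π*(1-w) := by nlinarith
      have : (1 - w + θ) ≤ (1+2*π)*(1-w) := by nlinarith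
      have hle : ((1 - w + θ) / (1 + 2*π))^2 ≤ (1-w)^2 := by
        rw [div_pow]
        rw [div_le_iff₀ (by positivity)]
        nlinarith
      nlinarith
    · have h2 : 2*w*(1 - Real.cos θ) ≥ 2*(θ/π)^2 := by nlinarith
      have hπ2 : (0:ℝ) < π^2 := by positivity
      have hπ9 : (9:ℝ) ≤ π^2 := by nlinarith
      have hmain : ((1 - w + θ))^2 ≤ 2*π^2*((1-w)^2 + (θ/π)^2) := by
        have hAM : (1-w+θ)^2 ≤ 2*(1-w)^2 + 2*θ^2 := by nlinarith [sq_nonneg (1-w-θ)]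
        have h4 : 2*π^2*((1-w)^2 + (θ/π)^2) = 2*π^2*(1-w)^2 + 2*θ^2 := by
          field_simp
        rw [h4]
        have h7 := mul_le_mul_of_nonneg_left (show (1:ℝ) ≤ π^2 by linarith) (sq_nonneg (1-w))
        linarith [hAM, h7]
      have hA : (0:ℝ) ≤ (1-w)^2 := sq_nonneg _
      have hB : (0:ℝ) ≤ (θ/π)^2 := sq_nonneg _
      have step1 : 2*π^2*((1-w)^2+(θ/π)^2) ≤ (1+2*π)^2*((1-w)^2+(θ/π)^2) := by
        have hc : (0:ℝ) ≤ (1+2*π)^2 - 2*π^2 := by nlinarith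
        nlinarith [mul_nonneg hc (add_nonneg hA hB)]
      have step2 : (1+2*π)^2*((1-w)^2+(θ/π)^2) ≤ (1+2*π)^2*((1-w)^2+2*w*(1-Real.cos θ)) := by
        have hd : (0:ℝ) ≤ 2*w*(1-Real.cos θ) - (θ/π)^2 := by linarith
        nlinarith [mul_nonneg (sq_nonneg (1+2*π)) hd]
      rw [div_pow, div_le_iff₀ (by positivity)]
      linarith
  exact (pow_le_pow_iff_left₀ ht0.le habs two_ne_zero).mp key

set_option maxHeartbeats 800000 in
lemma innerInt {w s : ℝ} (hw0 : 0 ≤ w) (hw1 : w < 1) (hs : 1 < s) :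
    ∫ θ in (0:ℝ)..(2*π), ‖1 - (w:ℂ) * Complex.exp (θ * Complex.I)‖ ^ (-s) ≤
      (1+2*π)^s * (2/(s-1)) * (1-w)^(1-s) := by
  have hπ := Real.pi_gt_three
  set g : ℝ → ℝ := fun θ => ‖1 - (w:ℂ) * Complex.exp (θ * Complex.I)‖ ^ (-s)
    with hg
  have hlb : ∀ θ : ℝ, 1 - w ≤ ‖1 - (w:ℂ) * Complex.exp (θ * Complex.I)‖ := by
    intro θ
    have hre : (1 - (w:ℂ) * Complex.exp (θ * Complex.I)).re = 1 - w * Real.cos θ := by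
      simp [Complex.exp_ofReal_mul_I_re]
    have := Complex.re_le_norm (1 - (w:ℂ) * Complex.exp (θ * Complex.I))
    rw [hre] at this
    nlinarith [Real.cos_le_one θ, Real.neg_one_le_cos θ]
  have hgc : Continuous g := by
    apply Continuous.rpow_const
    · exact continuous_norm.comp (by continuity)
    · intro θ; left
      exact ne_of_gt (lt_of_lt_of_le (by linarith) (hlb θ))
  -- symmetry: ∫_π^{2π} g = ∫_0^π g
  have hsym : ∀ x : ℝ, g (2*π - x) = g x := by
    intro x
    have h1 : Complex.exp (↑(2*π - x) * Complex.I) = Complex.exp (↑(-x) * Complex.I) := by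
      have he : (↑(2*π - x) * Complex.I : ℂ) = ↑(-x) * Complex.I + 2*π*Complex.I := by
        push_cast; ring
      rw [he, Complex.exp_add, Complex.exp_two_pi_mul_I, mul_one]
    have h2 : (1 - (w:ℂ) * Complex.exp (↑(-x) * Complex.I)) =
        (starRingEnd ℂ) (1 - (w:ℂ) * Complex.exp (↑x * Complex.I)) := by
      rw [map_sub, map_mul, ← Complex.exp_conj]
      simp [Complex.conj_ofReal]
    simp only [hg]
    rw [h1, h2, Complex.norm_conj]
  have hsplit : ∫ θ in (0:ℝ)..(2*π), g θ = 2 * ∫ θ in (0:ℝ)..π, g θ := by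
    have hI1 : IntervalIntegrable g volume 0 π := hgc.intervalIntegrable _ _
    have hI2 : IntervalIntegrable g volume π (2*π) := hgc.intervalIntegrable _ _
    rw [← integral_add_adjacent_intervals hI1 hI2]
    have : ∫ θ in π..(2*π), g θ = ∫ θ in (0:ℝ)..π, g θ := by
      have := intervalIntegral.integral_comp_sub_left (a := 0) (b := π) g (2*π)
      rw [show 2*π - π = π by ring, show 2*π - 0 = 2*π by ring] at this
      rw [← this]
      congr 1; ext x; exact hsym x
    rw [this]; ring
  rw [hsplit]
  -- bound on [0,π]
  have hdom : ∫ θ in (0:ℝ)..π, g θ ≤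
      ∫ θ in (0:ℝ)..π, (1+2*π)^s * (1 - w + θ)^(-s) := by
    apply intervalIntegral.integral_mono_on Real.pi_pos.le
      (hgc.intervalIntegrable _ _)
    · apply ContinuousOn.intervalIntegrable
      apply ContinuousOn.mul continuousOn_const
      apply ContinuousOn.rpow_const (by fun_prop)
      intro x hx
      rw [Set.uIcc_of_le Real.pi_pos.le] at hx
      left
      have := hx.1
      intro h; nlinarith [hx.1]
    · intro θ hθ
      have hb := absLB hw0 hw1 hθ.1 hθ.2
      have hbase : 0 < (1 - w + θ) / (1 + 2*π) := by
        apply div_pos (by nlinarith [hθ.1]) (by linarith)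
      have := Real.rpow_le_rpow_of_nonpos hbase hb (by linarith : -s ≤ 0)
      simp only [hg]
      refine le_trans this (le_of_eq ?_)
      rw [Real.div_rpow (by nlinarith [hθ.1]) (by linarith),
        Real.rpow_neg (by linarith : (0:ℝ) ≤ 1+2*π),
        div_eq_mul_inv, inv_inv, mul_comm]
  refine le_trans (by linarith : 2 * ∫ θ in (0:ℝ)..π, g θ ≤
      2 * ∫ θ in (0:ℝ)..π, (1+2*π)^s * (1 - w + θ)^(-s)) ?_
  rw [intervalIntegral.integral_const_mul]
  have hcomp : ∫ θ in (0:ℝ)..π, (1 - w + θ)^(-s) =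
      ∫ x in (1-w)..(1-w+π), x^(-s) := by
    have := intervalIntegral.integral_comp_add_left (a := 0) (b := π)
      (fun x => x^(-s)) (1-w)
    simpa using this
  rw [hcomp]
  rw [integral_rpow (Or.inr ⟨by intro h; linarith,
      by rw [Set.uIcc_of_le (by linarith)]; rintro ⟨h1, h2⟩; nlinarith⟩)]
  have hval : ((1-w+π) ^ (-s+1) - (1-w) ^ (-s+1)) / (-s+1) ≤ (1-w)^(1-s) / (s-1) := by
    rw [show (-s+1 : ℝ) = 1-s by ring]
    have hb0 : (0:ℝ) ≤ (1-w+π) ^ (1-s) := Real.rpow_nonneg (by linarith) _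
    have hss : s - 1 ≠ 0 := by linarith
    have e : ((1-w+π)^(1-s) - (1-w)^(1-s))/(1-s) =
        ((1-w)^(1-s) - (1-w+π)^(1-s))/(s-1) := by
      rw [div_eq_div_iff (by linarith) (by linarith : s - 1 ≠ 0)]
      ring
    rw [e]
    gcongr
    · linarith
  have hP : (0:ℝ) ≤ (1+2*π)^s := (Real.rpow_pos_of_pos (by linarith) s).le
  have hmul := mul_le_mul_of_nonneg_left hval (by positivity : (0:ℝ) ≤ 2*(1+2*π)^s)
  calc 2 * ((1+2*π)^s * (((1-w+π) ^ (-s+1) - (1-w) ^ (-s+1)) / (-s+1)))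
      = 2*(1+2*π)^s * (((1-w+π) ^ (-s+1) - (1-w) ^ (-s+1)) / (-s+1)) := by ring
    _ ≤ 2*(1+2*π)^s * ((1-w)^(1-s)/(s-1)) := hmul
    _ = (1+2*π)^s * (2/(s-1)) * (1-w)^(1-s) := by ring

set_option maxHeartbeats 800000 in
lemma outerInt {a c d : ℝ} (ha0 : 0 < a) (ha1 : a ≤ 1) (hd : 0 < d) (hcd : d < c) :
    ∫ u in (0:ℝ)..1, (u+a)^(-c) * u^(d-1) ≤ (1/d + 1/(c-d)) * a^(d-c) := by
  have hrint : IntervalIntegrable (fun u : ℝ => u^(d-1)) volume 0 1 :=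
    intervalIntegral.intervalIntegrable_rpow' (by linarith)
  have hgcont : ∀ b b' : ℝ, 0 ≤ b → ContinuousOn (fun u : ℝ => (u+a)^(-c)) (Set.uIcc b b') →
      True := fun _ _ _ _ => trivial
  have hcont : ContinuousOn (fun u : ℝ => (u+a)^(-c)) (Set.uIcc (0:ℝ) 1) := by
    apply ContinuousOn.rpow_const (by fun_prop)
    intro x hx
    rw [Set.uIcc_of_le (by norm_num)] at hx
    left; nlinarith [hx.1]
  have hint : IntervalIntegrable (fun u : ℝ => (u+a)^(-c) * u^(d-1)) volume 0 1 :=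
    hrint.continuousOn_mul hcont
  have hsub1 : IntervalIntegrable (fun u : ℝ => (u+a)^(-c) * u^(d-1)) volume 0 a := by
    apply hint.mono_set
    rw [Set.uIcc_of_le ha0.le, Set.uIcc_of_le (by norm_num : (0:ℝ) ≤ 1)]
    exact Set.Icc_subset_Icc le_rfl ha1
  have hsub2 : IntervalIntegrable (fun u : ℝ => (u+a)^(-c) * u^(d-1)) volume a 1 := by
    apply hint.mono_set
    rw [Set.uIcc_of_le ha1, Set.uIcc_of_le (by norm_num : (0:ℝ) ≤ 1)]
    exact Set.Icc_subset_Icc ha0.le le_rfl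
  rw [← integral_add_adjacent_intervals hsub1 hsub2]
  -- first piece
  have hI1 : ∫ u in (0:ℝ)..a, (u+a)^(-c) * u^(d-1) ≤ a^(d-c) / d := by
    have hmono : ∫ u in (0:ℝ)..a, (u+a)^(-c) * u^(d-1) ≤
        ∫ u in (0:ℝ)..a, a^(-c) * u^(d-1) := by
      apply integral_mono_on ha0.le hsub1
      · exact (intervalIntegral.intervalIntegrable_rpow' (by linarith)).const_mul _
      · intro u hu
        have h1 : (u+a)^(-c) ≤ a^(-c) :=
          Real.rpow_le_rpow_of_nonpos ha0 (by linarith [hu.1]) (by linarith)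
        exact mul_le_mul_of_nonneg_right h1 (Real.rpow_nonneg hu.1 _)
    rw [intervalIntegral.integral_const_mul, integral_rpow (Or.inl (by linarith))] at hmono
    rw [show d - 1 + 1 = d by ring, Real.zero_rpow (ne_of_gt hd)] at hmono
    refine hmono.trans (le_of_eq ?_)
    rw [sub_zero, show d - c = -c + d by ring, Real.rpow_add ha0]
    ring
  -- second piece
  have hI2 : ∫ u in a..1, (u+a)^(-c) * u^(d-1) ≤ a^(d-c) / (c-d) := by
    have hmono : ∫ u in a..1, (u+a)^(-c) * u^(d-1) ≤ ∫ u in a..1, u^(d-c-1) := by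
      apply integral_mono_on ha1 hsub2
      · apply ContinuousOn.intervalIntegrable
        apply ContinuousOn.rpow_const (by fun_prop)
        intro x hx
        rw [Set.uIcc_of_le ha1] at hx
        left; nlinarith [hx.1]
      · intro u hu
        have hu0 : 0 < u := lt_of_lt_of_le ha0 hu.1
        have h1 : (u+a)^(-c) ≤ u^(-c) :=
          Real.rpow_le_rpow_of_nonpos hu0 (by linarith) (by linarith)
        have h2 : u^(d-c-1) = u^(-c) * u^(d-1) := by
          rw [← Real.rpow_add hu0]; ring_nf
        rw [h2]
        exact mul_le_mul_of_nonneg_right h1 (Real.rpow_nonneg hu0.le _)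
    rw [integral_rpow (Or.inr ⟨by intro h; linarith,
      by rw [Set.uIcc_of_le ha1]; rintro ⟨h1, h2⟩; linarith⟩)] at hmono
    rw [show d - c - 1 + 1 = -(c-d) by ring] at hmono
    rw [Real.one_rpow, show -(c-d) = d - c by ring] at hmono
    have hA : (0:ℝ) ≤ a^(d-c) := Real.rpow_nonneg ha0.le _
    have e : (1 - a^(d-c))/(d-c) = (a^(d-c) - 1)/(c-d) := by
      rw [div_eq_div_iff (by linarith : d - c ≠ 0) (by linarith : c - d ≠ 0)]
      ring
    rw [e] at hmono
    refine hmono.trans ?_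
    gcongr
    · linarith
  have hsum : (1/d + 1/(c-d)) * a^(d-c) = a^(d-c)/d + a^(d-c)/(c-d) := by ring
  linarith [hI1, hI2]

/-- The integral mean `M_p(f,r)` on the circle of radius `r`. -/
noncomputable def circMean (p : ℝ) (f : ℂ → ℂ) (r : ℝ) : ℝ :=
  ((1 / (2 * π)) *
    ∫ θ in (0:ℝ)..(2 * π), ‖f (r * Complex.exp (θ * Complex.I))‖ ^ p) ^ (1 / p)

set_option maxHeartbeats 1600000 in
theorem stmt2 (β p q α : ℝ) (hβ : β > -1) (hp : 0 < p) (hq : 0 < q) (hα : 0 < α)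
    (hβp : β > α - 1 + 1 / p) :
    ∃ C : ℝ, C > 0 ∧ ∀ R : ℝ, R ∈ Set.Ico (0:ℝ) 1 →
      (∫ ρ in (0:ℝ)..1,
          circMean p (fun z => (1 - (R:ℂ) * z) ^ (-(β + 1) : ℂ)) ρ ^ q * (1 - ρ) ^ (α * q - 1))
          ^ (1 / q)
        ≤ C * (1 - R) ^ (-(β - α - 1 / p + 1)) := by
  have hπ := Real.pi_gt_three
  set s := (β+1)*p with hs_def
  set c := (β+1-1/p)*q with hc_def
  set d := α*q with hd_def
  have hp' : (0:ℝ) < 1/p := by positivity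
  have hs1 : 1 < s := by
    have h1 : 1/p < β + 1 := by linarith
    calc (1:ℝ) = (1/p)*p := by field_simp
      _ < (β+1)*p := by exact mul_lt_mul_of_pos_right h1 hp
  have hd0 : 0 < d := by positivity
  have hcd : d < c := by
    have h1 : α < β + 1 - 1/p := by linarith
    exact mul_lt_mul_of_pos_right h1 hq
  set K0p : ℝ := (1/(2*π)) * ((1+2*π)^s * (2/(s-1))) with hK0p_def
  have hK0p0 : 0 < K0p := by
    have h1 : (0:ℝ) < (1+2*π)^s := Real.rpow_pos_of_pos (by linarith) _
    have h2 : (0:ℝ) < 2/(s-1) := by apply div_pos <;> linarith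
    have h3 : (0:ℝ) < 1/(2*π) := by positivity
    positivity
  set K0 : ℝ := K0p ^ (1/p) with hK0_def
  have hK00 : 0 < K0 := Real.rpow_pos_of_pos hK0p0 _
  set K1 : ℝ := K0^q * 2^c with hK1_def
  have hK10 : 0 < K1 := by
    have h1 : (0:ℝ) < K0^q := Real.rpow_pos_of_pos hK00 _
    have h2 : (0:ℝ) < (2:ℝ)^c := Real.rpow_pos_of_pos (by norm_num) _
    positivity
  set K2 : ℝ := 1/d + 1/(c-d) with hK2_def
  have hK20 : 0 < K2 := by
    have h1 : (0:ℝ) < 1/d := by positivity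
    have h2 : (0:ℝ) < 1/(c-d) := by apply div_pos <;> linarith
    rw [hK2_def]; linarith
  refine ⟨(K1*K2)^(1/q), Real.rpow_pos_of_pos (mul_pos hK10 hK20) _, ?_⟩
  rintro R ⟨hR0, hR1⟩
  set a := 1 - R with ha_def
  have ha0 : 0 < a := by simp only [ha_def]; linarith
  have ha1 : a ≤ 1 := by simp only [ha_def]; linarith
  set F : ℝ → ℝ := fun ρ =>
    circMean p (fun z => (1 - (R:ℂ) * z) ^ (-(β + 1) : ℂ)) ρ ^ q * (1 - ρ) ^ (d - 1)
    with hF_def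
  have hcirc0 : ∀ ρ : ℝ, 0 ≤ circMean p (fun z => (1 - (R:ℂ) * z) ^ (-(β + 1) : ℂ)) ρ := by
    intro ρ
    apply Real.rpow_nonneg
    apply mul_nonneg (by positivity)
    exact intervalIntegral.integral_nonneg (by positivity)
      (fun u _ => Real.rpow_nonneg (norm_nonneg _) _)
  have hF0 : ∀ ρ ∈ Set.Icc (0:ℝ) 1, 0 ≤ F ρ := by
    intro ρ hρ
    exact mul_nonneg (Real.rpow_nonneg (hcirc0 ρ) _)
      (Real.rpow_nonneg (by linarith [hρ.2]) _)
  -- pointwise bound on circMean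
  have hpoint : ∀ ρ ∈ Set.Icc (0:ℝ) 1,
      circMean p (fun z => (1 - (R:ℂ) * z) ^ (-(β + 1) : ℂ)) ρ ≤ K0 * (1-R*ρ)^((1-s)/p) := by
    intro ρ hρ
    have hw0 : 0 ≤ R*ρ := mul_nonneg hR0 hρ.1
    have hw1 : R*ρ < 1 := lt_of_le_of_lt (mul_le_of_le_one_right hR0 hρ.2) hR1
    have hIeq : (∫ θ in (0:ℝ)..(2*π), ‖(1 - (R:ℂ) * ((ρ:ℂ) * Complex.exp ((θ:ℂ) * Complex.I))) ^ (-(β + 1) : ℂ)‖ ^ p)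
        = ∫ θ in (0:ℝ)..(2*π),
            ‖1 - ((R*ρ:ℝ):ℂ) * Complex.exp ((θ:ℂ) * Complex.I)‖ ^ (-s) := by
      apply intervalIntegral.integral_congr
      intro θ _
      show ‖(1 - (R:ℂ) * ((ρ:ℂ) * Complex.exp ((θ:ℂ) * Complex.I))) ^ (-(β + 1) : ℂ)‖ ^ p
        = ‖1 - ((R*ρ:ℝ):ℂ) * Complex.exp ((θ:ℂ) * Complex.I)‖ ^ (-s)
      have h1 : (1 - (R:ℂ) * ((ρ:ℂ) * Complex.exp ((θ:ℂ) * Complex.I)))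
          = 1 - ((R*ρ:ℝ):ℂ) * Complex.exp ((θ:ℂ) * Complex.I) := by push_cast; ring
      rw [h1, show (-(β+1) : ℂ) = ((-(β+1):ℝ):ℂ) by push_cast; ring,
        Complex.norm_cpow_real, ← Real.rpow_mul (norm_nonneg _),
        show (-(β+1))*p = -s by rw [hs_def]; ring]
    unfold circMean
    simp only
    rw [hIeq]
    have hIle := innerInt hw0 hw1 hs1
    have hI0 : 0 ≤ ∫ θ in (0:ℝ)..(2*π),
        ‖1 - ((R*ρ:ℝ):ℂ) * Complex.exp ((θ:ℂ) * Complex.I)‖ ^ (-s) :=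
      intervalIntegral.integral_nonneg (by positivity)
        (fun u _ => Real.rpow_nonneg (norm_nonneg _) _)
    have step : (1/(2*π)) * (∫ θ in (0:ℝ)..(2*π),
        ‖1 - ((R*ρ:ℝ):ℂ) * Complex.exp ((θ:ℂ) * Complex.I)‖ ^ (-s))
        ≤ K0p * (1-R*ρ)^(1-s) := by
      have h2 := mul_le_mul_of_nonneg_left hIle (show (0:ℝ) ≤ 1/(2*π) by positivity)
      calc (1/(2*π)) * (∫ θ in (0:ℝ)..(2*π),
            ‖1 - ((R*ρ:ℝ):ℂ) * Complex.exp ((θ:ℂ) * Complex.I)‖ ^ (-s))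
          ≤ (1/(2*π)) * ((1+2*π)^s * (2/(s-1)) * (1-R*ρ)^(1-s)) := h2
        _ = K0p * (1-R*ρ)^(1-s) := by rw [hK0p_def]; ring
    have h3 := Real.rpow_le_rpow (by positivity) step (le_of_lt hp')
    refine le_trans h3 (le_of_eq ?_)
    rw [Real.mul_rpow hK0p0.le (Real.rpow_nonneg (by linarith) _),
      ← Real.rpow_mul (by linarith : (0:ℝ) ≤ 1-R*ρ),
      show (1-s)*(1/p) = (1-s)/p by ring, hK0_def]
  -- pointwise bound F ≤ G
  set G : ℝ → ℝ := fun ρ => K1 * (((1-ρ)+a)^(-c) * (1-ρ)^(d-1)) with hG_def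
  have hFG : ∀ ρ ∈ Set.Icc (0:ℝ) 1, F ρ ≤ G ρ := by
    intro ρ hρ
    have h1 := hpoint ρ hρ
    have hwpos : (0:ℝ) < 1 - R*ρ := by
      have := lt_of_le_of_lt (mul_le_of_le_one_right hR0 hρ.2) hR1
      linarith
    have h2 : circMean p (fun z => (1 - (R:ℂ) * z) ^ (-(β + 1) : ℂ)) ρ ^ q
        ≤ K0^q * (1-R*ρ)^(-c) := by
      have h2a := Real.rpow_le_rpow (hcirc0 ρ) h1 hq.le
      rw [Real.mul_rpow hK00.le (Real.rpow_nonneg hwpos.le _),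
        ← Real.rpow_mul hwpos.le] at h2a
      refine h2a.trans (le_of_eq ?_)
      congr 1
      rw [hc_def, hs_def]
      field_simp
      ring
    have h4 : (1-R*ρ)^(-c) ≤ 2^c * ((1-ρ)+a)^(-c) := by
      have hge : ((1-ρ)+a)/2 ≤ 1-R*ρ := by nlinarith [hρ.1, hρ.2]
      have hpos : (0:ℝ) < ((1-ρ)+a)/2 := by
        have := hρ.2; apply div_pos (by linarith) (by norm_num)
      have h4a := Real.rpow_le_rpow_of_nonpos hpos hge (by linarith : -c ≤ 0)
      refine h4a.trans (le_of_eq ?_)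
      rw [Real.div_rpow (by linarith [hρ.2]) (by norm_num : (0:ℝ) ≤ 2),
        Real.rpow_neg (by norm_num : (0:ℝ) ≤ 2), div_eq_mul_inv, inv_inv, mul_comm]
    have h5 : 0 ≤ (1-ρ)^(d-1) := Real.rpow_nonneg (by linarith [hρ.2]) _
    simp only [hF_def, hG_def]
    calc circMean p (fun z => (1 - (R:ℂ) * z) ^ (-(β + 1) : ℂ)) ρ ^ q * (1-ρ)^(d-1)
        ≤ (K0^q * (1-R*ρ)^(-c)) * (1-ρ)^(d-1) := mul_le_mul_of_nonneg_right h2 h5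
      _ ≤ (K0^q * (2^c * ((1-ρ)+a)^(-c))) * (1-ρ)^(d-1) := by
          apply mul_le_mul_of_nonneg_right _ h5
          exact mul_le_mul_of_nonneg_left h4 (Real.rpow_nonneg hK00.le _)
      _ = K1 * (((1-ρ)+a)^(-c) * (1-ρ)^(d-1)) := by rw [hK1_def]; ring
  -- integrability of G
  have hbase : IntervalIntegrable (fun u : ℝ => (u+a)^(-c) * u^(d-1)) volume 0 1 := by
    have hrint : IntervalIntegrable (fun u : ℝ => u^(d-1)) volume 0 1 :=
      intervalIntegral.intervalIntegrable_rpow' (by linarith)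
    apply hrint.continuousOn_mul
    apply ContinuousOn.rpow_const (by fun_prop)
    intro x hx
    rw [Set.uIcc_of_le (by norm_num : (0:ℝ) ≤ 1)] at hx
    left; nlinarith [hx.1]
  have hGint : IntervalIntegrable G volume 0 1 := by
    apply IntervalIntegrable.const_mul
    have h1 := hbase.comp_sub_left 1
    norm_num at h1
    exact h1.symm
  have hle : (∫ ρ in (0:ℝ)..1, F ρ) ≤ ∫ ρ in (0:ℝ)..1, G ρ := by
    rw [intervalIntegral.integral_of_le (by norm_num : (0:ℝ) ≤ 1),
      intervalIntegral.integral_of_le (by norm_num : (0:ℝ) ≤ 1)]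
    apply integral_mono_of_nonneg
    · filter_upwards [ae_restrict_mem measurableSet_Ioc] with ρ hρ
      exact hF0 ρ ⟨hρ.1.le, hρ.2⟩
    · exact hGint.1
    · filter_upwards [ae_restrict_mem measurableSet_Ioc] with ρ hρ
      exact hFG ρ ⟨hρ.1.le, hρ.2⟩
  have hGval : (∫ ρ in (0:ℝ)..1, G ρ) ≤ K1 * (K2 * a^(d-c)) := by
    rw [hG_def, intervalIntegral.integral_const_mul]
    apply mul_le_mul_of_nonneg_left _ hK10.le
    have heq : (∫ ρ in (0:ℝ)..1, ((1-ρ)+a)^(-c) * (1-ρ)^(d-1))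
        = ∫ u in (0:ℝ)..1, (u+a)^(-c) * u^(d-1) := by
      have h1 := intervalIntegral.integral_comp_sub_left (a := 0) (b := 1)
        (fun u : ℝ => (u+a)^(-c) * u^(d-1)) 1
      norm_num at h1
      rw [← h1]
    rw [heq]
    exact outerInt ha0 ha1 hd0 hcd
  have hL0 : 0 ≤ ∫ ρ in (0:ℝ)..1, F ρ :=
    intervalIntegral.integral_nonneg (by norm_num) hF0
  have hfinal := Real.rpow_le_rpow hL0 (hle.trans hGval) (by positivity : (0:ℝ) ≤ 1/q)
  refine le_trans hfinal (le_of_eq ?_)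
  rw [show K1*(K2*a^(d-c)) = (K1*K2)*a^(d-c) by ring,
    Real.mul_rpow (mul_pos hK10 hK20).le (Real.rpow_nonneg ha0.le _)]
  congr 1
  rw [← Real.rpow_mul ha0.le]
  congr 1
  rw [hd_def, hc_def]
  field_simp
  ring
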